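/- arXiv:2101.12243 — 2 statements merged into one kernel-verified Lean document; each statement's English description precedes it below -/
import Mathlib

section
/- Let f, g, m, s⁺, s⁻, μ₀⁺, C_p > 0 and let d ∈ ℝ. Define the 2×2 real matrix A with entries a₁₁ = ((m s⁺ + s⁻)/3) f³ + (m s⁺/2) f² g, a₁₂ = m s⁺ (f³/3 + f² g/2), a₂₁ = ((m s⁺ + s⁻)/2) f² g + m s⁺ f g² + (s⁺/(3μ₀⁺)) g³ + C_p g^(p+2) Φ'(d), a₂₂ = (m s⁺/2) f² g + m s⁺ f g² + (s⁺/(3μ₀⁺)) g³ + C_p g^(p+2) Φ'(d), where Φ'(d) = p |d|^(p-1) with p ≥ 1. Then det A = (m s⁻ s⁺/12) f⁴ g² + (s⁻ s⁺/(9μ₀⁺)) f³ g³ + (C_p s⁻/3) f³ g^(p+2) Φ'(d), and in particular det A > 0 when d ≠ 0, and det A > 0 also for d = 0 since the first two terms are positive. -/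
/-!
Subtracting the second column from the first leaves the column `(s⁻ f³ / 3, s⁻ f² g / 2)`, so the
large common terms cancel and `det A = (s⁻ f³ / 3) a₂₂ - (s⁻ f² g / 2) a₁₂`; expanding gives the
closed form, whose terms are all nonnegative and the middle one strictly positive.
-/

theorem Matrix.det_fin_two_of_eq_sub_mul {R : Type*} [CommRing R] (a b c d : R) :
    !![a, b; c, d].det = (a - b) * d - (c - d) * b := by
  rw [Matrix.det_fin_two_of]
  ring

/-- Determinant of the principal-symbol matrix of the linearized two-phase
thin-film operator, and its positivity (normal ellipticity). -/
theorem symbol_matrix_det (f g m sp sm mu Cp p d : ℝ)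
    (hf : 0 < f) (hg : 0 < g) (hm : 0 < m) (hsp : 0 < sp) (hsm : 0 < sm)
    (hmu : 0 < mu) (hCp : 0 < Cp) (hp : 1 ≤ p) :
    ∀ A : Matrix (Fin 2) (Fin 2) ℝ,
      A = !![((m * sp + sm) / 3) * f ^ 3 + (m * sp / 2) * f ^ 2 * g,
             m * sp * (f ^ 3 / 3 + f ^ 2 * g / 2);
             ((m * sp + sm) / 2) * f ^ 2 * g + m * sp * f * g ^ 2
               + (sp / (3 * mu)) * g ^ 3 + Cp * g ^ (p + 2) * (p * |d| ^ (p - 1)),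
             (m * sp / 2) * f ^ 2 * g + m * sp * f * g ^ 2
               + (sp / (3 * mu)) * g ^ 3 + Cp * g ^ (p + 2) * (p * |d| ^ (p - 1))] →
      A.det = (m * sm * sp / 12) * f ^ 4 * g ^ 2
            + (sm * sp / (9 * mu)) * f ^ 3 * g ^ 3
            + (Cp * sm / 3) * f ^ 3 * g ^ (p + 2) * (p * |d| ^ (p - 1))
        ∧ 0 < A.det := by
  intro A hA
  have hdet : A.det = (m * sm * sp / 12) * f ^ 4 * g ^ 2
      + (sm * sp / (9 * mu)) * f ^ 3 * g ^ 3
      + (Cp * sm / 3) * f ^ 3 * g ^ (p + 2) * (p * |d| ^ (p - 1)) := by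
    rw [hA, Matrix.det_fin_two_of_eq_sub_mul]
    ring
  have hp₀ : 0 ≤ p := zero_le_one.trans hp
  exact ⟨hdet, hdet ▸ by positivity⟩
end

section
/- Let Ω ⊂ ℝ be a bounded interval, f, g ∈ C³(closure of Ω) with f > 0, g > 0 on the closure, f_x = g_x = 0 on ∂Ω, and suppose the dissipation D(f,g) = ∫_Ω [C_p g^(p+2) |(f+g)_{xxx}|^(p+1) + (s⁺/(3μ₀⁺)) g³ |(f+g)_{xxx}|² + f |(1/(2√(m s⁺))) f (s⁻ f_{xxx} + m s⁺ (f+g)_{xxx}) + √(m s⁺) g (f+g)_{xxx}|² + (1/(12 m s⁺)) f³ |s⁻ f_{xxx} + m s⁺ (f+g)_{xxx}|²] dx equals zero, where all constants C_p, s⁺, s⁻, m, μ₀⁺ are positive and p ≥ 1. Then f and g are constant functions on Ω. -/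
/-! Each term of the dissipation integrand is nonnegative and the integrand is continuous, so
`D(f, g) = 0` forces it to vanish pointwise. The second and fourth terms then give
`(f + g)''' = 0` and `s⁻ f''' + m s⁺ (f + g)''' = 0`, hence `f''' = g''' = 0`. So `f'` and `g'`
are affine, and the Neumann conditions at both ends of the interval force them to vanish. -/

open Set MeasureTheory intervalIntegral

theorem eqOn_zero_of_intervalIntegral_eq_zero {μ : Measure ℝ} [IsLocallyFiniteMeasure μ]
    [μ.IsOpenPosMeasure] [NullSingletonClass μ] {f : ℝ → ℝ} {a b : ℝ} (hab : a < b)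
    (hf : ContinuousOn f (Icc a b)) (hnn : ∀ x ∈ Icc a b, 0 ≤ f x)
    (h : ∫ x in a..b, f x ∂μ = 0) : EqOn f 0 (Icc a b) := by
  have hnn' : 0 ≤ᵐ[μ.restrict (Ioc a b)] f :=
    ae_restrict_of_forall_mem measurableSet_Ioc fun x hx => hnn x (Ioc_subset_Icc_self hx)
  have hae := (integral_eq_zero_iff_of_le_of_nonneg_ae hab.le hnn'
    (hf.intervalIntegrable_of_Icc hab.le)).1 h
  rw [Measure.restrict_congr_set Ioc_ae_eq_Icc] at hae
  exact Measure.eqOn_Icc_of_ae_eq μ hab.ne hae hf continuousOn_const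

theorem eqOn_zero_of_derivWithin_eq_const {u : ℝ → ℝ} {a b c : ℝ} (hab : a < b)
    (hu : DifferentiableOn ℝ u (Icc a b)) (hc : ∀ x ∈ Ico a b, derivWithin u (Icc a b) x = c)
    (ha : u a = 0) (hb : u b = 0) : EqOn u 0 (Icc a b) := by
  have hφ : ∀ x ∈ Icc a b, u x - c * x = u a - c * a := by
    refine constant_of_derivWithin_zero (hu.sub (differentiableOn_id.const_mul c)) fun x hx => ?_
    have hx' : x ∈ Icc a b := Ico_subset_Icc_self hx
    have hφ' :=
      (hu x hx').hasDerivWithinAt.fun_sub ((hasDerivAt_id' x).const_mul c).hasDerivWithinAt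
    rw [hφ'.derivWithin (uniqueDiffOn_Icc hab x hx'), hc x hx, mul_one, sub_self]
  have hc0 : c = 0 := by
    have hφb := hφ b (right_mem_Icc.2 hab.le)
    rw [ha, hb] at hφb
    have hcba : c * (b - a) = 0 := by linarith
    exact (mul_eq_zero.1 hcba).resolve_right (sub_ne_zero.2 hab.ne')
  intro x hx
  simpa [ha, hc0] using hφ x hx

theorem constant_of_iteratedDerivWithin_three_zero {f : ℝ → ℝ} {a b : ℝ} (hab : a < b)
    (hf : ContDiffOn ℝ 3 f (Icc a b))
    (h3 : ∀ x ∈ Icc a b, iteratedDerivWithin 3 f (Icc a b) x = 0)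
    (ha : derivWithin f (Icc a b) a = 0) (hb : derivWithin f (Icc a b) b = 0) :
    ∀ x ∈ Icc a b, f x = f a := by
  have hs : UniqueDiffOn ℝ (Icc a b) := uniqueDiffOn_Icc hab
  have hf' : ContDiffOn ℝ 2 (derivWithin f (Icc a b)) (Icc a b) := hf.derivWithin hs (by norm_num)
  have hf'' : ContDiffOn ℝ 1 (derivWithin (derivWithin f (Icc a b)) (Icc a b)) (Icc a b) :=
    hf'.derivWithin hs (by norm_num)
  have hf''_const :=
    constant_of_derivWithin_zero (hf''.differentiableOn one_ne_zero) fun x hx => by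
      simpa only [iteratedDerivWithin_eq_iterate, Function.iterate_succ_apply',
        Function.iterate_zero_apply] using h3 x (Ico_subset_Icc_self hx)
  have hf'_zero : EqOn (derivWithin f (Icc a b)) 0 (Icc a b) :=
    eqOn_zero_of_derivWithin_eq_const hab (hf'.differentiableOn (by norm_num))
      (fun x hx => hf''_const x (Ico_subset_Icc_self hx)) ha hb
  exact constant_of_derivWithin_zero (hf.differentiableOn (by norm_num))
    fun x hx => hf'_zero (Ico_subset_Icc_self hx)

/-- The integrand of `D(f, g)` at a point where `f, g, f_xxx, g_xxx` take the values
`f, g, f₃, g₃`. -/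
noncomputable def dissipationDensity (m sp sm mu Cp p f g f₃ g₃ : ℝ) : ℝ :=
  Cp * g ^ (p + 2) * |f₃ + g₃| ^ (p + 1)
    + (sp / (3 * mu)) * g ^ 3 * (f₃ + g₃) ^ 2
    + f * ((1 / (2 * Real.sqrt (m * sp))) * f * (sm * f₃ + m * sp * (f₃ + g₃))
      + Real.sqrt (m * sp) * g * (f₃ + g₃)) ^ 2
    + (1 / (12 * m * sp)) * f ^ 3 * (sm * f₃ + m * sp * (f₃ + g₃)) ^ 2

theorem dissipationDensity_nonneg {m sp sm mu Cp p f g f₃ g₃ : ℝ} (hm : 0 ≤ m)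
    (hsp : 0 ≤ sp) (hmu : 0 ≤ mu) (hCp : 0 ≤ Cp) (hf : 0 ≤ f) (hg : 0 ≤ g) :
    0 ≤ dissipationDensity m sp sm mu Cp p f g f₃ g₃ := by
  unfold dissipationDensity
  positivity

theorem eq_zero_of_dissipationDensity_eq_zero {m sp sm mu Cp p f g f₃ g₃ : ℝ} (hm : 0 < m)
    (hsp : 0 < sp) (hsm : sm ≠ 0) (hmu : 0 < mu) (hCp : 0 ≤ Cp) (hf : 0 < f) (hg : 0 < g)
    (h : dissipationDensity m sp sm mu Cp p f g f₃ g₃ = 0) : f₃ = 0 ∧ g₃ = 0 := by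
  unfold dissipationDensity at h
  obtain ⟨h123, h4⟩ := (add_eq_zero_iff_of_nonneg (by positivity) (by positivity)).1 h
  obtain ⟨h12, -⟩ := (add_eq_zero_iff_of_nonneg (by positivity) (by positivity)).1 h123
  obtain ⟨-, h2⟩ := (add_eq_zero_iff_of_nonneg (by positivity) (by positivity)).1 h12
  have hsum : f₃ + g₃ = 0 := by simpa [hsp.ne', hmu.ne', hg.ne'] using h2
  have hf₃ : f₃ = 0 := by simpa [hsum, hm.ne', hsp.ne', hf.ne', hsm] using h4
  exact ⟨hf₃, by linarith⟩

theorem continuousOn_dissipationDensity {m sp sm mu Cp p : ℝ} {s : Set ℝ}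
    {f g f₃ g₃ : ℝ → ℝ} (hf : ContinuousOn f s) (hg : ContinuousOn g s)
    (hf₃ : ContinuousOn f₃ s) (hg₃ : ContinuousOn g₃ s) (hp : 0 ≤ p + 1) :
    ContinuousOn (fun x => dissipationDensity m sp sm mu Cp p (f x) (g x) (f₃ x) (g₃ x)) s := by
  unfold dissipationDensity
  have hsum := hf₃.add hg₃
  refine ((ContinuousOn.add ?_ ?_).add ?_).add ?_
  · exact (continuousOn_const.mul (hg.rpow_const fun _ _ => Or.inr (by linarith))).mul
      (hsum.abs.rpow_const fun _ _ => Or.inr hp)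
  all_goals fun_prop

/-- Characterisation of steady states (Corollary 5.2): if the dissipation
vanishes, the film heights are flat. -/
theorem steady_states_flat (a b m sp sm mu Cp p : ℝ) (hab : a < b)
    (hm : 0 < m) (hsp : 0 < sp) (hsm : 0 < sm) (hmu : 0 < mu)
    (hCp : 0 < Cp) (hp : 1 ≤ p)
    (f g : ℝ → ℝ)
    (hf : ContDiffOn ℝ 3 f (Set.Icc a b)) (hg : ContDiffOn ℝ 3 g (Set.Icc a b))
    (hfpos : ∀ x ∈ Set.Icc a b, 0 < f x) (hgpos : ∀ x ∈ Set.Icc a b, 0 < g x)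
    (hbfa : derivWithin f (Set.Icc a b) a = 0)
    (hbfb : derivWithin f (Set.Icc a b) b = 0)
    (hbga : derivWithin g (Set.Icc a b) a = 0)
    (hbgb : derivWithin g (Set.Icc a b) b = 0)
    (hD : (∫ x in a..b,
        (Cp * (g x) ^ (p + 2)
            * |iteratedDerivWithin 3 f (Set.Icc a b) x
                + iteratedDerivWithin 3 g (Set.Icc a b) x| ^ (p + 1)
          + (sp / (3 * mu)) * (g x) ^ 3
            * (iteratedDerivWithin 3 f (Set.Icc a b) x
                + iteratedDerivWithin 3 g (Set.Icc a b) x) ^ 2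
          + f x * ((1 / (2 * Real.sqrt (m * sp))) * f x
              * (sm * iteratedDerivWithin 3 f (Set.Icc a b) x
                  + m * sp * (iteratedDerivWithin 3 f (Set.Icc a b) x
                      + iteratedDerivWithin 3 g (Set.Icc a b) x))
              + Real.sqrt (m * sp) * g x
                * (iteratedDerivWithin 3 f (Set.Icc a b) x
                    + iteratedDerivWithin 3 g (Set.Icc a b) x)) ^ 2
          + (1 / (12 * m * sp)) * (f x) ^ 3
            * (sm * iteratedDerivWithin 3 f (Set.Icc a b) x
                + m * sp * (iteratedDerivWithin 3 f (Set.Icc a b) x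
                    + iteratedDerivWithin 3 g (Set.Icc a b) x)) ^ 2)) = 0) :
    ∀ x ∈ Set.Icc a b, ∀ y ∈ Set.Icc a b, f x = f y ∧ g x = g y := by
  have hs : UniqueDiffOn ℝ (Icc a b) := uniqueDiffOn_Icc hab
  have hdensity : EqOn (fun x => dissipationDensity m sp sm mu Cp p (f x) (g x)
      (iteratedDerivWithin 3 f (Icc a b) x) (iteratedDerivWithin 3 g (Icc a b) x)) 0 (Icc a b) :=
    eqOn_zero_of_intervalIntegral_eq_zero hab
      (continuousOn_dissipationDensity hf.continuousOn hg.continuousOn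
        (hf.continuousOn_iteratedDerivWithin le_rfl hs)
        (hg.continuousOn_iteratedDerivWithin le_rfl hs) (by linarith))
      (fun x hx => dissipationDensity_nonneg hm.le hsp.le hmu.le hCp.le
        (hfpos x hx).le (hgpos x hx).le)
      hD
  have h3 (x) (hx : x ∈ Icc a b) := eq_zero_of_dissipationDensity_eq_zero hm hsp hsm.ne' hmu
    hCp.le (hfpos x hx) (hgpos x hx) (hdensity hx)
  have hfc := constant_of_iteratedDerivWithin_three_zero hab hf (fun x hx => (h3 x hx).1) hbfa hbfb
  have hgc := constant_of_iteratedDerivWithin_three_zero hab hg (fun x hx => (h3 x hx).2) hbga hbgb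
  intro x hx y hy
  exact ⟨(hfc x hx).trans (hfc y hy).symm, (hgc x hx).trans (hgc y hy).symm⟩
end
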